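/- Let P be a finitely generated perfect group (i.e., P equals its own derived subgroup [P,P]) and let G be a non-abelian finitely generated group with finite palindromic width k = pw(G, X) with respect to a finite generating set X. Then there exists c ∈ G (possibly c = 1) such that for any finite generating set S of P, every element of the restricted regular wreath product P ≀ G is a product of at most k + 1 palindromes with respect to the generating set consisting of the canonical copies of X ∪ {c} and of S; that is, pw(P ≀ G, X ∪ {c} ∪ S) ≤ k + 1. -/

import Mathlib

open Function

section WreathDefs

variable (G A : Type*) [Group G] [Group A]

/-- The subgroup of finitely supported functions `A → G` (pointwise operations). -/
def restrictedBase : Subgroup (A → G) where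
  carrier := {f | (Function.mulSupport f).Finite}
  one_mem' := by simp [Function.mulSupport_one]
  mul_mem' := fun hf hg => (hf.union hg).subset (Function.mulSupport_mul _ _)
  inv_mem' := fun hf => by simpa [Function.mulSupport_inv] using hf

variable {G A}

lemma shift_mem (a : A) (f : restrictedBase G A) :
    (fun x => (f : A → G) (a * x)) ∈ restrictedBase G A := by
  have h : Function.mulSupport (fun x => (f : A → G) (a * x)) =
      (fun x : A => a * x) ⁻¹' Function.mulSupport (f : A → G) :=
    Function.mulSupport_comp_eq_preimage _ _
  show (Function.mulSupport _).Finite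
  rw [h]
  exact f.2.preimage (mul_right_injective a).injOn

/-- The translation automorphism of the restricted base, `(a • f) x = f (a⁻¹ * x)`. -/
noncomputable def shiftEquiv (a : A) : restrictedBase G A ≃* restrictedBase G A where
  toFun f := ⟨fun x => (f : A → G) (a⁻¹ * x), shift_mem a⁻¹ f⟩
  invFun f := ⟨fun x => (f : A → G) (a * x), shift_mem a f⟩
  left_inv f := by ext x; simp
  right_inv f := by ext x; simp
  map_mul' f g := by ext x; simp

variable (G A)

/-- The translation action of `A` on finitely supported functions `A → G`. -/
noncomputable def wreathAction : A →* MulAut (restrictedBase G A) where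
  toFun a := shiftEquiv a
  map_one' := by ext f x; simp [shiftEquiv]
  map_mul' a b := by ext f x; simp [shiftEquiv, mul_assoc]

/-- The restricted regular wreath product `G ≀ A`. -/
noncomputable abbrev Wreath := restrictedBase G A ⋊[wreathAction G A] A

variable {G A}

/-- The finitely supported function equal to `g` at `1` and trivial elsewhere. -/
noncomputable def atOne (g : G) : restrictedBase G A :=
  letI := Classical.decEq A
  ⟨fun x => if x = 1 then g else 1, by
    apply Set.Finite.subset (Set.finite_singleton (1 : A))
    intro x hx
    simp only [Function.mem_mulSupport] at hx
    by_contra hx1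
    exact hx (if_neg (by simpa using hx1))⟩

/-- The natural generating set of `G ≀ A` built from generating sets of the factors. -/
noncomputable def wreathGens (XB : Set G) (XA : Set A) : Set (Wreath G A) :=
  ((fun g => SemidirectProduct.inl (atOne g)) '' XB) ∪ (SemidirectProduct.inr '' XA)

end WreathDefs

section Palindromes

variable {W : Type*} [Group W]

/-- `g` is a palindrome with respect to `S`: it is the product of a word over `S`
(entries in `S ∪ S⁻¹`) which reads the same forwards and backwards. -/
def IsPalindrome (S : Set W) (g : W) : Prop :=
  ∃ l : List W, (∀ x ∈ l, x ∈ S ∪ S⁻¹) ∧ l.reverse = l ∧ l.prod = g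

/-- `g` is a product of at most `n` palindromes with respect to `S`. -/
def ProdOfPal (S : Set W) (n : ℕ) (g : W) : Prop :=
  ∃ l : List W, l.length ≤ n ∧ (∀ p ∈ l, IsPalindrome S p) ∧ l.prod = g

/-- The palindromic width of a group with respect to `S` (`⊤` if infinite). -/
noncomputable def palWidth (S : Set W) : ℕ∞ :=
  sInf {n : ℕ∞ | ∃ m : ℕ, n = (m : ℕ∞) ∧ ∀ g : W, ProdOfPal S m g}

/-- The word length of `g` with respect to `S`. -/
noncomputable def wordLength (S : Set W) (g : W) : ℕ :=
  sInf {n : ℕ | ∃ l : List W, l.length = n ∧ (∀ x ∈ l, x ∈ S ∪ S⁻¹) ∧ l.prod = g}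

end Palindromes

/-!
If `(w, 1)` lies in the subgroup of `W × W` generated by the pairs `(x, x⁻¹)`, `x ∈ T`, then a word
for `w` whose letterwise inverse has trivial product, followed by its reverse, is a palindrome with
product `w`. These `w` form a subgroup `palKernel T`, normal when `T` generates `W`; and if it is
trivial, then `(u, v) ↦ v` on the pairs subgroup defines an endomorphism inverting every `x ∈ T`.
As `G` is non-abelian, some `c` makes `X ∪ {c}` inverted by no endomorphism, so `palKernel` of `G`
contains some `a ≠ 1`, and so does `palKernel` of `P ≀ G`. Modulo that normal subgroup,
translation by `a` is trivial, while it moves the copy of `P` at `1` to one commuting with it: this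
copy is then abelian, hence trivial since `P` is perfect, and so is the whole base. Therefore
`(f, g) = f · g` is one palindrome times `k` palindromes of `G`.
-/

open Subgroup Set

section Palindrome

variable {W V : Type*} [Group W] [Group V] {T : Set W}

def palPairs (T : Set W) : Subgroup (W × W) :=
  closure ((fun x => (x, x⁻¹)) '' T)

def palKernel (T : Set W) : Subgroup W :=
  (palPairs T).comap (MonoidHom.inl W W)

lemma mem_palKernel {w : W} : w ∈ palKernel T ↔ (w, 1) ∈ palPairs T := Iff.rfl

lemma inv_mem_letters {x : W} (hx : x ∈ T ∪ T⁻¹) : x⁻¹ ∈ T ∪ T⁻¹ := by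
  simpa [Set.mem_inv, or_comm] using hx

lemma exists_word_of_mem_palPairs {q : W × W} (hq : q ∈ palPairs T) :
    ∃ l : List W, (∀ x ∈ l, x ∈ T ∪ T⁻¹) ∧ l.prod = q.1 ∧ (l.map (·⁻¹)).prod = q.2 := by
  induction hq using closure_induction with
  | mem q hq =>
    obtain ⟨x, hx, rfl⟩ := hq
    exact ⟨[x], by simp [hx], by simp, by simp⟩
  | one => exact ⟨[], by simp, rfl, rfl⟩
  | mul q r _ _ hq hr =>
    obtain ⟨l, hl, hl₁, hl₂⟩ := hq
    obtain ⟨m, hm, hm₁, hm₂⟩ := hr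
    refine ⟨l ++ m, ?_, by simp [hl₁, hm₁], by simp [hl₂, hm₂]⟩
    simp only [List.mem_append]
    rintro x (hx | hx)
    exacts [hl x hx, hm x hx]
  | inv q _ hq =>
    obtain ⟨l, hl, hl₁, hl₂⟩ := hq
    refine ⟨(l.map (·⁻¹)).reverse, ?_, ?_, ?_⟩
    · simp only [List.mem_reverse, List.mem_map]
      rintro _ ⟨x, hx, rfl⟩
      exact inv_mem_letters (hl x hx)
    · rw [← List.prod_inv_reverse, hl₁, Prod.fst_inv]
    · rw [List.map_reverse, ← List.prod_inv_reverse, hl₂, Prod.snd_inv]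

lemma IsPalindrome.of_mem_palKernel {w : W} (hw : w ∈ palKernel T) : IsPalindrome T w := by
  obtain ⟨l, hl, hl₁, hl₂⟩ := exists_word_of_mem_palPairs hw
  have hrev : l.reverse.prod = 1 := by
    simpa [List.map_map, hl₂] using (List.prod_inv_reverse (l.map (·⁻¹))).symm
  refine ⟨l ++ l.reverse, ?_, by simp, by simpa [hrev] using hl₁⟩
  simpa only [List.mem_append, List.mem_reverse, or_self] using hl

lemma map_fst_palPairs (T : Set W) : (palPairs T).map (MonoidHom.fst W W) = closure T := by
  rw [palPairs, MonoidHom.map_closure, Set.image_image]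
  simp

lemma palKernel_normal (hT : closure T = ⊤) : (palKernel T).Normal where
  conj_mem w hw v := by
    obtain ⟨⟨v, v'⟩, hv, rfl⟩ : v ∈ (palPairs T).map (MonoidHom.fst W W) := by
      simp [map_fst_palPairs, hT]
    exact mem_palKernel.2 <| by
      simpa using (palPairs T).mul_mem ((palPairs T).mul_mem hv hw) ((palPairs T).inv_mem hv)

lemma swap_mem_palPairs {q : W × W} (hq : q ∈ palPairs T) : q.swap ∈ palPairs T := by
  induction hq using closure_induction with
  | mem q hq =>
    obtain ⟨x, hx, rfl⟩ := hq
    simpa using (palPairs T).inv_mem (subset_closure ⟨x, hx, rfl⟩)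
  | one => exact (palPairs T).one_mem
  | mul q r _ _ hq hr => exact (palPairs T).mul_mem hq hr
  | inv q _ hq => exact (palPairs T).inv_mem hq

lemma exists_hom_eq_inv_of_palKernel_eq_bot (hT : closure T = ⊤) (h : palKernel T = ⊥) :
    ∃ ι : W →* W, ∀ x ∈ T, ι x = x⁻¹ := by
  set f := (MonoidHom.fst W W).comp (palPairs T).subtype
  have hinj : Function.Injective f := by
    refine (injective_iff_map_eq_one f).2 fun ⟨⟨u, v⟩, hq⟩ hu => ?_
    obtain rfl : u = 1 := hu
    have hv : v ∈ palKernel T := swap_mem_palPairs hq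
    rw [h, mem_bot] at hv
    simp [hv]
  have hsurj : Function.Surjective f := fun v => by
    obtain ⟨q, hq, rfl⟩ : v ∈ (palPairs T).map (MonoidHom.fst W W) := by
      simp [map_fst_palPairs, hT]
    exact ⟨⟨q, hq⟩, rfl⟩
  set e := MulEquiv.ofBijective f ⟨hinj, hsurj⟩
  refine ⟨(MonoidHom.snd W W).comp ((palPairs T).subtype.comp e.symm.toMonoidHom), fun x hx => ?_⟩
  have : e.symm x = ⟨(x, x⁻¹), subset_closure ⟨x, hx, rfl⟩⟩ := e.symm_apply_eq.2 rfl
  simp [this]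

lemma mem_palKernel_map (φ : W →* V) {T' : Set V} (hφ : MapsTo φ T T') {w : W}
    (hw : w ∈ palKernel T) : φ w ∈ palKernel T' := by
  have : (palPairs T).map (φ.prodMap φ) ≤ palPairs T' := by
    rw [palPairs, MonoidHom.map_closure, Set.image_image]
    exact closure_mono (by rintro _ ⟨x, hx, rfl⟩; exact ⟨φ x, hφ hx, by simp⟩)
  exact mem_palKernel.2 (by simpa using this ⟨_, hw, rfl⟩)

lemma IsPalindrome.map (φ : W →* V) {T' : Set V} (hφ : MapsTo φ T T') {w : W}
    (h : IsPalindrome T w) : IsPalindrome T' (φ w) := by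
  obtain ⟨l, hl, hrev, rfl⟩ := h
  refine ⟨l.map φ, ?_, by rw [← List.map_reverse, hrev], (map_list_prod φ l).symm⟩
  simp only [List.mem_map]
  rintro _ ⟨x, hx, rfl⟩
  rcases hl x hx with hx | hx
  · exact Or.inl (hφ hx)
  · exact Or.inr (by simpa [Set.mem_inv] using hφ hx)

lemma ProdOfPal.map (φ : W →* V) {T' : Set V} (hφ : MapsTo φ T T') {n : ℕ} {w : W}
    (h : ProdOfPal T n w) : ProdOfPal T' n (φ w) := by
  obtain ⟨l, hlen, hl, rfl⟩ := h
  refine ⟨l.map φ, by simpa using hlen, ?_, (map_list_prod φ l).symm⟩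
  simp only [List.mem_map]
  rintro _ ⟨p, hp, rfl⟩
  exact (hl p hp).map φ hφ

lemma ProdOfPal.palindrome_mul {n : ℕ} {p w : W} (h : ProdOfPal T n w) (hp : IsPalindrome T p) :
    ProdOfPal T (n + 1) (p * w) := by
  obtain ⟨l, hlen, hl, rfl⟩ := h
  exact ⟨p :: l, by simpa using hlen, List.forall_mem_cons.2 ⟨hp, hl⟩, rfl⟩

lemma prodOfPal_of_palWidth_eq {k : ℕ} (hk : palWidth T = k) (w : W) : ProdOfPal T k w := by
  rw [palWidth] at hk
  have hne : {n : ℕ∞ | ∃ m : ℕ, n = m ∧ ∀ g : W, ProdOfPal T m g}.Nonempty := by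
    by_contra hempty
    rw [Set.not_nonempty_iff_eq_empty.1 hempty, sInf_empty] at hk
    exact ENat.top_ne_natCast k hk
  obtain ⟨m, hm, hprod⟩ := csInf_mem hne
  rw [hk, Nat.cast_inj] at hm
  exact hm ▸ hprod w

end Palindrome

section Inversion

variable {G : Type*} [Group G]

lemma mul_comm_of_map_eq_inv (ι : G →* G) (h : ∀ x, ι x = x⁻¹) (a b : G) : a * b = b * a := by
  have := map_mul ι a b
  rw [h, h, h, ← mul_inv_rev] at this
  exact inv_injective this

lemma exists_not_exists_hom_eq_inv {X : Set G} (hX : closure X = ⊤)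
    (hna : ∃ a b : G, a * b ≠ b * a) : ∃ c : G, ¬∃ ι : G →* G, ∀ x ∈ X ∪ {c}, ι x = x⁻¹ := by
  by_cases h : ∃ ι : G →* G, ∀ x ∈ X, ι x = x⁻¹
  · obtain ⟨ι, hι⟩ := h
    obtain ⟨a, b, hab⟩ := hna
    obtain ⟨c, hc⟩ : ∃ c, ι c ≠ c⁻¹ := by
      by_contra! h
      exact hab (mul_comm_of_map_eq_inv ι h a b)
    refine ⟨c, fun ⟨ι', hι'⟩ => hc ?_⟩
    have : ι' = ι :=
      MonoidHom.eq_of_eqOn_dense hX fun x hx => (hι' x (.inl hx)).trans (hι x hx).symm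
    exact this ▸ hι' c (.inr rfl)
  · exact ⟨1, fun ⟨ι, hι⟩ => h ⟨ι, fun x hx => hι x (.inl hx)⟩⟩

end Inversion

namespace Wreath

open SemidirectProduct

variable {P G : Type*} [Group P] [Group G]

noncomputable def atOneHom : P →* restrictedBase P G where
  toFun := atOne
  map_one' := by ext x; simp [atOne]
  map_mul' p q := by
    ext x
    simp only [atOne, Subgroup.coe_mul, Pi.mul_apply]
    split <;> simp

noncomputable def single (x : G) : P →* restrictedBase P G :=
  (wreathAction P G x).toMonoidHom.comp atOneHom

lemma coe_single [DecidableEq G] (x : G) (p : P) :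
    (single x p : G → P) = Pi.mulSingle x p := by
  funext y
  simp [single, atOneHom, wreathAction, shiftEquiv, atOne, Pi.mulSingle_apply, inv_mul_eq_one,
    eq_comm]

lemma single_one (p : P) : single (1 : G) p = atOne p := by
  simp [single, atOneHom]

lemma commute_single {x y : G} (h : x ≠ y) (p q : P) : Commute (single x p) (single y q) := by
  classical
  refine Commute.of_map (f := (restrictedBase P G).subtype) Subtype.val_injective ?_
  simpa [coe_single] using Pi.mulSingle_commute (f := fun _ : G => P) h p q

lemma inl_single (x : G) (p : P) :
    (inl (single x p) : Wreath P G) = inr x * inl (atOne p) * (inr x)⁻¹ := by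
  rw [← map_inv]
  exact inl_aut x (atOne p)

lemma eq_top_of_single_mem {K : Subgroup (restrictedBase P G)} (hK : ∀ x p, single x p ∈ K) :
    K = ⊤ := by
  classical
  suffices h : ∀ (s : Finset G) (f : restrictedBase P G), mulSupport (f : G → P) ⊆ s → f ∈ K from
    eq_top_iff.2 fun f _ => h (Set.Finite.toFinset f.2) f (Set.Finite.coe_toFinset f.2).superset
  intro s
  induction s using Finset.induction_on with
  | empty =>
    intro f hf
    have : f = 1 := Subtype.ext (mulSupport_eq_empty_iff.1 (by simpa using hf))
    exact this ▸ K.one_mem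
  | insert x s _ ih =>
    intro f hf
    have hrest : (single x ((f : G → P) x))⁻¹ * f ∈ K := by
      refine ih _ fun y hy => ?_
      rcases eq_or_ne y x with rfl | hyx
      · simp [mem_mulSupport, coe_single] at hy
      · have hfy : y ∈ mulSupport (f : G → P) := by
          simpa [mem_mulSupport, coe_single, Pi.mulSingle_eq_of_ne hyx] using hy
        simpa [hyx] using hf hfy
    simpa only [mul_inv_cancel_left] using K.mul_mem (hK x ((f : G → P) x)) hrest

lemma closure_wreathGens {S : Set P} {Y : Set G} (hS : closure S = ⊤) (hY : closure Y = ⊤) :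
    closure (wreathGens S Y) = ⊤ := by
  set K := closure (wreathGens S Y)
  have hinr : ∀ g, inr g ∈ K := by
    have : (closure Y).map inr ≤ K := by
      rw [MonoidHom.map_closure]
      exact closure_mono subset_union_right
    exact fun g => this ⟨g, hY ▸ mem_top g, rfl⟩
  have hatOne : ∀ p, inl (atOne p) ∈ K := by
    have : (closure S).map (inl.comp atOneHom) ≤ K := by
      rw [MonoidHom.map_closure]
      exact closure_mono subset_union_left
    exact fun p => this ⟨p, hS ▸ mem_top p, rfl⟩
  have hbase : K.comap inl = ⊤ := eq_top_of_single_mem fun x p => by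
    rw [mem_comap, inl_single]
    exact K.mul_mem (K.mul_mem (hinr x) (hatOne p)) (K.inv_mem (hinr x))
  refine eq_top_iff.2 fun w _ => inl_left_mul_inr_right w ▸ K.mul_mem ?_ (hinr _)
  exact (mem_comap (f := inl)).1 (hbase ▸ mem_top w.left)

lemma inl_mem_of_inr_mem (hperf : commutator P = ⊤) {N : Subgroup (Wreath P G)} [N.Normal]
    {a : G} (ha : a ≠ 1) (haN : inr a ∈ N) (f : restrictedBase P G) : inl f ∈ N := by
  let φ : P →* Wreath P G ⧸ N := (QuotientGroup.mk' N).comp (inl.comp atOneHom)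
  have hshift (t : P) : QuotientGroup.mk' N (inl (single a t)) = φ t := by
    rw [inl_single]
    simp [φ, atOneHom, (QuotientGroup.eq_one_iff _).2 haN]
  have hcomm (s t : P) : Commute (φ s) (φ t) := by
    rw [← hshift t]
    simpa [φ, atOneHom, single_one] using (commute_single ha.symm s t).map ((QuotientGroup.mk' N).comp inl)
  have hker : φ.ker = ⊤ := by
    rw [eq_top_iff, ← hperf, _root_.commutator_def, commutator_le]
    exact fun s _ t _ => (MonoidHom.mem_ker).2 <| by
      rw [map_commutatorElement, commutatorElement_eq_one_iff_commute]
      exact hcomm s t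
  have hbase : N.comap inl = ⊤ := eq_top_of_single_mem fun x p => by
    have hp : inl (atOne p) ∈ N := (QuotientGroup.eq_one_iff _).1 (hker ▸ mem_top p : p ∈ φ.ker)
    rw [mem_comap, inl_single]
    exact Normal.conj_mem ‹_› _ hp (inr x)
  exact (mem_comap (f := inl)).1 (hbase ▸ mem_top f)

end Wreath

open SemidirectProduct Wreath in
theorem perfect_wreath_palindromic_width_general {P G : Type*} [Group P] [Group G]
    (hperf : commutator P = ⊤)
    (X : Finset G) (hX : Subgroup.closure (X : Set G) = ⊤)
    (hna : ∃ a b : G, a * b ≠ b * a)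
    (k : ℕ) (hk : palWidth (X : Set G) = (k : ℕ∞)) :
    ∃ c : G, ∀ S : Finset P, Subgroup.closure (S : Set P) = ⊤ →
      ∀ g : Wreath P G,
        ProdOfPal (wreathGens (S : Set P) ((X : Set G) ∪ {c})) (k + 1) g := by
  obtain ⟨c, hc⟩ := exists_not_exists_hom_eq_inv hX hna
  refine ⟨c, fun S hS g => ?_⟩
  set Y : Set G := (X : Set G) ∪ {c}
  have hY : closure Y = ⊤ := top_unique (hX ▸ closure_mono subset_union_left)
  obtain ⟨a, haY, ha⟩ : ∃ a ∈ palKernel Y, a ≠ 1 := by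
    by_contra! h
    exact hc (exists_hom_eq_inv_of_palKernel_eq_bot hY ((eq_bot_iff_forall _).2 h))
  have hinr : MapsTo inr Y (wreathGens (S : Set P) Y) := fun x hx => Or.inr ⟨x, hx, rfl⟩
  have := palKernel_normal (closure_wreathGens hS hY)
  have hbase := inl_mem_of_inr_mem hperf ha (mem_palKernel_map inr hinr haY) g.left
  rw [← inl_left_mul_inr_right g]
  exact ((prodOfPal_of_palWidth_eq hk g.right).map inr (hinr.mono_left subset_union_left))
    |>.palindrome_mul (.of_mem_palKernel hbase)

/-- Let `P` be a finitely generated perfect group and `G` a non-abelian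
finitely generated group with palindromic width `k = pw(G, X)` for a finite generating set
`X`. Then there is `c ∈ G` (possibly `c = 1`) such that for every finite generating set
`S` of `P`, every element of `P ≀ G` is a product of at most `k + 1` palindromes with
respect to the canonical copies of `X ∪ {c}` and of `S`. -/
theorem perfect_wreath_palindromic_width {P G : Type*} [Group P] [Group G]
    (hPfg : Group.FG P) (hperf : commutator P = ⊤)
    (X : Finset G) (hX : Subgroup.closure (X : Set G) = ⊤)
    (hna : ∃ a b : G, a * b ≠ b * a)
    (k : ℕ) (hk : palWidth (X : Set G) = (k : ℕ∞)) :
    ∃ c : G, ∀ S : Finset P, Subgroup.closure (S : Set P) = ⊤ →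
      ∀ g : Wreath P G,
        ProdOfPal (wreathGens (S : Set P) ((X : Set G) ∪ {c})) (k + 1) g :=
  perfect_wreath_palindromic_width_general hperf X hX hna k hk
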